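/- arXiv:1905.11607 — 3 statements merged into one kernel-verified Lean document; each statement's English description precedes it below -/
import Mathlib

section
/- If n ≥ 4f + 1, a client collects timestamps from at least n - f servers of which at most f are faulty, and the (f+1)-st largest collected timestamp is t, then t is less than or equal to the maximum timestamp held by some correct server among the responders. -/
/-! The f+1 largest responses are all at least t, and at most f of them come from faulty
servers, so one of them is the honest report of a correct server's clock. -/

theorem Finset.card_filter_eq_countP_toList {α : Type*} (s : Finset α) (p : α → Prop)
    [DecidablePred p] : (s.filter p).card = s.toList.countP (p ·) := by
  rw [← Multiset.coe_countP, s.coe_toList, Multiset.countP_eq_card_filter]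
  rfl

theorem List.Pairwise.add_one_le_countP_ge_of_getElem?_eq {β : Type*} [Preorder β]
    [DecidableLE β] {l : List β} (hl : l.Pairwise (· ≥ ·)) {k : ℕ} {t : β}
    (ht : l[k]? = some t) : k + 1 ≤ l.countP (t ≤ ·) := by
  obtain ⟨hk, rfl⟩ := List.getElem?_eq_some_iff.mp ht
  have hge : ∀ x ∈ l.take (k + 1), l[k] ≤ x := by
    intro x hx
    obtain ⟨i, hi, rfl⟩ := List.getElem_of_mem hx
    rw [List.length_take] at hi
    rw [List.getElem_take]
    rcases (Nat.lt_succ_iff.mp (lt_of_lt_of_le hi (min_le_left _ _))).eq_or_lt with rfl | hik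
    · exact le_rfl
    · exact List.pairwise_iff_getElem.mp hl i k _ hk hik
  calc k + 1 = (l.take (k + 1)).countP (l[k] ≤ ·) := by
        rw [List.countP_eq_length.mpr (by simpa using hge), List.length_take]; omega
    _ ≤ l.countP (l[k] ≤ ·) := (l.take_sublist _).countP_le

theorem f1st_largest_le_correct_clock_general
    {α : Type*} (f : ℕ)
    (Faulty R : Finset α)
    (clock resp : α → ℤ)
    (hfcard : Faulty.card ≤ f)
    (hhonest : ∀ s ∈ R, s ∉ Faulty → resp s = clock s)
    (L : List ℤ) (hperm : L.Perm (R.toList.map resp))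
    (hsorted : L.Pairwise (· ≥ ·))
    (t : ℤ) (ht : L[f]? = some t) :
    ∃ s ∈ R, s ∉ Faulty ∧ t ≤ clock s := by
  have hcount : f + 1 ≤ (R.filter (t ≤ resp ·)).card :=
    calc f + 1 ≤ L.countP (t ≤ ·) := hsorted.add_one_le_countP_ge_of_getElem?_eq ht
      _ = (R.toList.map resp).countP (t ≤ ·) := hperm.countP_eq _
      _ = (R.filter (t ≤ resp ·)).card := by
        rw [List.countP_map, Finset.card_filter_eq_countP_toList]; rfl
  obtain ⟨s, hsS, hsF⟩ :=
    Finset.exists_mem_notMem_of_card_lt_card (hfcard.trans_lt (Nat.lt_of_succ_le hcount))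
  obtain ⟨hsR, hts⟩ := Finset.mem_filter.mp hsS
  exact ⟨s, hsR, hsF, hhonest s hsR hsF ▸ hts⟩

/-- The (f+1)-st largest collected timestamp is at most the clock of some
correct responder. -/
theorem f1st_largest_le_correct_clock
    {α : Type*} [DecidableEq α] (n f : ℕ)
    (Servers Faulty R : Finset α)
    (clock resp : α → ℤ)
    (hn : Servers.card = n) (hf : Faulty ⊆ Servers) (hfcard : Faulty.card ≤ f)
    (h4f : n ≥ 4 * f + 1)
    (hR : R ⊆ Servers) (hRcard : n - f ≤ R.card)
    (hhonest : ∀ s ∈ R, s ∉ Faulty → resp s = clock s)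
    (L : List ℤ) (hperm : L.Perm (R.toList.map resp))
    (hsorted : L.Pairwise (· ≥ ·))
    (t : ℤ) (ht : L[f]? = some t) :
    ∃ s ∈ R, s ∉ Faulty ∧ t ≤ clock s :=
  f1st_largest_le_correct_clock_general f Faulty R clock resp hfcard hhonest L hperm hsorted t ht
end

section
/- Given a multiset of at least n - f integer responses where at most f values are arbitrary (faulty) and each honest value is at most M (the maximum clock held by any correct server), the (f+1)-st largest response is at most M. -/
/-!
If the `(f+1)`-st largest value exceeded `M`, then at least `f + 1` responses would exceed `M`;
but a response exceeding `M` must sit at a faulty index, and there are at most `f` of those.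
-/

namespace List

variable {α : Type*}

theorem countP_eq_card_filter_univ (l : List α) (p : α → Bool) :
    l.countP p = (Finset.univ.filter fun i : Fin l.length => p l[(i : ℕ)]).card := by
  rw [Finset.card_filter, Fin.sum_univ_fun_getElem l fun a => if p a then 1 else 0]
  simp [sum_map_ite, countP_eq_length_filter]

theorem countP_le_card_of_notMem {l : List α} {p : α → Bool} {F : Finset ℕ}
    (h : ∀ i : Fin l.length, (i : ℕ) ∉ F → p l[(i : ℕ)] = false) :
    l.countP p ≤ F.card := by
  rw [countP_eq_card_filter_univ, ← Finset.card_map Fin.valEmbedding]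
  refine Finset.card_le_card fun j hj => ?_
  obtain ⟨i, hi, rfl⟩ := Finset.mem_map.mp hj
  by_contra hiF
  simp [h i hiF] at hi

theorem Pairwise.succ_le_countP_getElem_le [LinearOrder α] {l : List α}
    (hl : l.Pairwise (· ≥ ·)) {k : ℕ} (hk : k < l.length) :
    k + 1 ≤ l.countP (l[k] ≤ ·) := by
  have hprefix : ∀ x ∈ l.take (k + 1), l[k] ≤ x := by
    intro x hx
    obtain ⟨i, hi, rfl⟩ := mem_take_iff_getElem.mp hx
    exact hl.rel_get_of_le (a := ⟨i, by omega⟩) (b := ⟨k, hk⟩) (by simp; omega)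
  have hlen : (l.take (k + 1)).length = k + 1 := by simp; omega
  rw [← hlen, ← (countP_eq_length (p := (l[k] ≤ ·))).mpr (by simpa using hprefix)]
  exact (take_sublist _ _).countP_le

end List

theorem f1st_largest_le_bound_general
    (f : ℕ) (M : ℤ) (L : List ℤ)
    (F : Finset ℕ) (hF : F.card ≤ f)
    (hhonest : ∀ i : Fin L.length, (i : ℕ) ∉ F → L.get i ≤ M)
    (L' : List ℤ) (hperm : L'.Perm L) (hsorted : L'.Pairwise (· ≥ ·))
    (t : ℤ) (ht : L'[f]? = some t) :
    t ≤ M := by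
  obtain ⟨hf, rfl⟩ := List.getElem?_eq_some_iff.mp ht
  by_contra! hlarge
  have hfaulty : L.countP (M < ·) ≤ f :=
    (List.countP_le_card_of_notMem fun i hi => by simpa using hhonest i hi).trans hF
  have htop : f + 1 ≤ L'.countP (L'[f] ≤ ·) := hsorted.succ_le_countP_getElem_le hf
  have hmono : L'.countP (L'[f] ≤ ·) ≤ L'.countP (M < ·) :=
    List.countP_mono_left fun x _ hx => by simpa using hlarge.trans_le (by simpa using hx)
  rw [hperm.countP_eq (M < ·)] at hmono
  omega

/-- The (f+1)-st largest of at least n-f responses, at most f of which are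
faulty and the rest bounded by M, is at most M. -/
theorem f1st_largest_le_bound
    (n f : ℕ) (M : ℤ) (L : List ℤ)
    (h4f : n ≥ 4 * f + 1)
    (hlen : n - f ≤ L.length)
    (F : Finset ℕ) (hF : F.card ≤ f)
    (hhonest : ∀ i : Fin L.length, (i : ℕ) ∉ F → L.get i ≤ M)
    (L' : List ℤ) (hperm : L'.Perm L) (hsorted : L'.Pairwise (· ≥ ·))
    (t : ℤ) (ht : L'[f]? = some t) :
    t ≤ M :=
  f1st_largest_le_bound_general f M L F hF hhonest L' hperm hsorted t ht
end

section
/- Any sequence of transactions can be reordered into a canonical order by a sequence of adjacent swaps of non-conflicting pairs, provided any two transactions that are out of order relative to the canonical order are non-conflicting; the resulting execution yields the same final state and same per-transaction results. -/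
/-- Final state after executing a list of transactions. -/
def execState {K V Res τ : Type*} (apply : τ → (K → V) → (K → V) × Res) :
    List τ → (K → V) → (K → V)
  | [], σ => σ
  | T :: L, σ => execState apply L (apply T σ).1

/-- Per-transaction results of executing a list of transactions. -/
def execResults {K V Res τ : Type*} (apply : τ → (K → V) → (K → V) × Res) :
    List τ → (K → V) → List (τ × Res)
  | [], _ => []
  | T :: L, σ => (T, (apply T σ).2) :: execResults apply L (apply T σ).1

/-- Two transactions conflict if one's write set meets the other's footprint. -/
def conflict {K Res V τ : Type*} (R W : τ → Set K)
    (_apply : τ → (K → V) → (K → V) × Res) (T1 T2 : τ) : Prop :=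
  (W T1 ∩ (R T2 ∪ W T2)).Nonempty ∨ (W T2 ∩ (R T1 ∪ W T1)).Nonempty

/-!
Two non-conflicting transactions commute: neither writes a key the other reads, so each reads the
same values in either order and returns the same result, and their write sets are disjoint, so the
final state is the same. Insertion sort inserts the head `T` of the list into the sorted tail by
moving it past exactly the smaller transactions that follow it in the list; each such pair is
out of order, hence non-conflicting, so every step is a commuting adjacent swap.
-/

namespace Transactions

variable {K V Res τ : Type*}

def WritesWithin (W : τ → Set K) (apply : τ → (K → V) → (K → V) × Res) : Prop :=
  ∀ T σ k, k ∉ W T → (apply T σ).1 k = σ k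

def ReadsWithin (R W : τ → Set K) (apply : τ → (K → V) → (K → V) × Res) : Prop :=
  ∀ T σ σ', (∀ k ∈ R T, σ k = σ' k) →
    (apply T σ).2 = (apply T σ').2 ∧ ∀ k ∈ W T, (apply T σ).1 k = (apply T σ').1 k

section Commute

variable {R W : τ → Set K} {apply : τ → (K → V) → (K → V) × Res}

theorem not_conflict_iff {T₁ T₂ : τ} :
    ¬ conflict R W apply T₁ T₂ ↔
      Disjoint (W T₁) (R T₂ ∪ W T₂) ∧ Disjoint (W T₂) (R T₁ ∪ W T₁) := by
  simp only [conflict, not_or, Set.not_nonempty_iff_eq_empty, Set.disjoint_iff_inter_eq_empty]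

theorem snd_apply_apply_of_disjoint (hmod : WritesWithin W apply) (hdep : ReadsWithin R W apply)
    {T₁ T₂ : τ} (h : Disjoint (W T₂) (R T₁)) (σ : K → V) :
    (apply T₁ (apply T₂ σ).1).2 = (apply T₁ σ).2 :=
  (hdep T₁ _ _ fun _ hk => hmod T₂ σ _ (Set.disjoint_right.mp h hk)).1

theorem fst_apply_apply_of_disjoint (hmod : WritesWithin W apply) (hdep : ReadsWithin R W apply)
    {T₁ T₂ : τ} (h : Disjoint (W T₂) (R T₁)) (σ : K → V) {k : K} (hk : k ∈ W T₁) :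
    (apply T₁ (apply T₂ σ).1).1 k = (apply T₁ σ).1 k :=
  (hdep T₁ _ _ (fun _ hj => hmod T₂ σ _ (Set.disjoint_right.mp h hj))).2 k hk

theorem fst_apply_comm_of_not_conflict (hmod : WritesWithin W apply)
    (hdep : ReadsWithin R W apply) {T₁ T₂ : τ} (h : ¬ conflict R W apply T₁ T₂) (σ : K → V) :
    (apply T₂ (apply T₁ σ).1).1 = (apply T₁ (apply T₂ σ).1).1 := by
  obtain ⟨h₁, h₂⟩ := not_conflict_iff.mp h
  rw [Set.disjoint_union_right] at h₁ h₂
  funext k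
  by_cases hk₁ : k ∈ W T₁
  · have hk₂ : k ∉ W T₂ := Set.disjoint_left.mp h₁.2 hk₁
    rw [hmod T₂ _ k hk₂, fst_apply_apply_of_disjoint hmod hdep h₂.1 σ hk₁]
  by_cases hk₂ : k ∈ W T₂
  · rw [hmod T₁ _ k hk₁, fst_apply_apply_of_disjoint hmod hdep h₁.1 σ hk₂]
  rw [hmod T₂ _ k hk₂, hmod T₁ σ k hk₁, hmod T₁ _ k hk₁, hmod T₂ σ k hk₂]

end Commute

def ExecEquiv (apply : τ → (K → V) → (K → V) × Res) (l l' : List τ) : Prop :=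
  ∀ σ, execState apply l σ = execState apply l' σ ∧
    (execResults apply l σ).Perm (execResults apply l' σ)

namespace ExecEquiv

variable {apply : τ → (K → V) → (K → V) × Res} {l l' l'' : List τ}

@[refl]
theorem refl (l : List τ) : ExecEquiv apply l l := fun _ => ⟨rfl, .refl _⟩

@[symm]
theorem symm (h : ExecEquiv apply l l') : ExecEquiv apply l' l :=
  fun σ => ⟨(h σ).1.symm, (h σ).2.symm⟩

@[trans]
theorem trans (h : ExecEquiv apply l l') (h' : ExecEquiv apply l' l'') : ExecEquiv apply l l'' :=
  fun σ => ⟨(h σ).1.trans (h' σ).1, (h σ).2.trans (h' σ).2⟩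

theorem cons (T : τ) (h : ExecEquiv apply l l') : ExecEquiv apply (T :: l) (T :: l') :=
  fun σ => ⟨(h _).1, ((h _).2).cons (T, (apply T σ).2)⟩

theorem swap_of_not_conflict {R W : τ → Set K} (hmod : WritesWithin W apply)
    (hdep : ReadsWithin R W apply) {T₁ T₂ : τ} (h : ¬ conflict R W apply T₁ T₂) (l : List τ) :
    ExecEquiv apply (T₁ :: T₂ :: l) (T₂ :: T₁ :: l) := by
  intro σ
  obtain ⟨h₁, h₂⟩ := not_conflict_iff.mp h
  rw [Set.disjoint_union_right] at h₁ h₂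
  have hstate := fst_apply_comm_of_not_conflict hmod hdep h σ
  refine ⟨by simp only [execState, hstate], ?_⟩
  simp only [execResults, hstate, snd_apply_apply_of_disjoint hmod hdep h₁.1,
    snd_apply_apply_of_disjoint hmod hdep h₂.1]
  exact .swap _ _ _

end ExecEquiv

section Sorting

variable [LinearOrder τ] {R W : τ → Set K} {apply : τ → (K → V) → (K → V) × Res}

theorem execEquiv_orderedInsert (hmod : WritesWithin W apply) (hdep : ReadsWithin R W apply)
    (T : τ) (l : List τ) (h : ∀ b ∈ l, b < T → ¬ conflict R W apply T b) :
    ExecEquiv apply (l.orderedInsert (· ≤ ·) T) (T :: l) := by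
  induction l with
  | nil => rfl
  | cons b l ih =>
    by_cases hTb : T ≤ b
    · rw [List.orderedInsert_cons_of_le _ _ hTb]
    rw [List.orderedInsert_cons, if_neg hTb]
    have hb : ¬ conflict R W apply T b := h b List.mem_cons_self (not_le.mp hTb)
    exact ((ih fun b' hb' => h b' (List.mem_cons_of_mem _ hb')).cons b).trans
      (ExecEquiv.swap_of_not_conflict hmod hdep hb l).symm

theorem execEquiv_insertionSort (hmod : WritesWithin W apply) (hdep : ReadsWithin R W apply)
    (l : List τ)
    (h : ∀ T₁ T₂ : τ, [T₁, T₂].Sublist l → T₂ < T₁ → ¬ conflict R W apply T₁ T₂) :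
    ExecEquiv apply (l.insertionSort (· ≤ ·)) l := by
  induction l with
  | nil => rfl
  | cons T l ih =>
    have h_tail : ∀ T₁ T₂ : τ, [T₁, T₂].Sublist l → T₂ < T₁ → ¬ conflict R W apply T₁ T₂ :=
      fun T₁ T₂ hs => h T₁ T₂ (hs.trans (List.sublist_cons_self _ _))
    have h_head : ∀ b ∈ l.insertionSort (· ≤ ·), b < T → ¬ conflict R W apply T b :=
      fun b hb => h T b <| List.cons_sublist_cons.mpr <|
        List.singleton_sublist.mpr ((List.perm_insertionSort _ l).mem_iff.mp hb)
    rw [List.insertionSort_cons]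
    exact (execEquiv_orderedInsert hmod hdep T _ h_head).trans ((ih h_tail).cons T)

end Sorting

end Transactions

theorem reorder_to_canonical_general
    {K V Res τ : Type*} [LinearOrder τ]
    (R W : τ → Set K)
    (apply : τ → (K → V) → (K → V) × Res)
    (hmod : ∀ T σ k, k ∉ W T → (apply T σ).1 k = σ k)
    (hdep : ∀ T σ σ', (∀ k ∈ R T, σ k = σ' k) →
      (apply T σ).2 = (apply T σ').2 ∧ ∀ k ∈ W T, (apply T σ).1 k = (apply T σ').1 k)
    (L : List τ)
    -- every out-of-order pair (w.r.t. the canonical linear order) is non-conflicting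
    (hooo : ∀ T1 T2 : τ, [T1, T2].Sublist L → T2 < T1 →
      ¬ conflict R W apply T1 T2)
    (σ : K → V) :
    execState apply (L.insertionSort (· ≤ ·)) σ = execState apply L σ ∧
      ∀ T r, ((T, r) ∈ execResults apply L σ ↔
        (T, r) ∈ execResults apply (L.insertionSort (· ≤ ·)) σ) := by
  obtain ⟨hstate, hresults⟩ := Transactions.execEquiv_insertionSort hmod hdep L hooo σ
  exact ⟨hstate, fun T r => hresults.mem_iff.symm⟩

/-- Reordering a list of distinct transactions into canonical order, when every
out-of-order pair is non-conflicting, preserves the final state and every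
transaction's result. -/
theorem reorder_to_canonical
    {K V Res τ : Type*} [LinearOrder τ]
    (R W : τ → Set K)
    (apply : τ → (K → V) → (K → V) × Res)
    (hmod : ∀ T σ k, k ∉ W T → (apply T σ).1 k = σ k)
    (hdep : ∀ T σ σ', (∀ k ∈ R T, σ k = σ' k) →
      (apply T σ).2 = (apply T σ').2 ∧ ∀ k ∈ W T, (apply T σ).1 k = (apply T σ').1 k)
    (L : List τ) (hnodup : L.Nodup)
    -- every out-of-order pair (w.r.t. the canonical linear order) is non-conflicting
    (hooo : ∀ T1 T2 : τ, [T1, T2].Sublist L → T2 < T1 →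
      ¬ conflict R W apply T1 T2)
    (σ : K → V) :
    execState apply (L.insertionSort (· ≤ ·)) σ = execState apply L σ ∧
      ∀ T r, ((T, r) ∈ execResults apply L σ ↔
        (T, r) ∈ execResults apply (L.insertionSort (· ≤ ·)) σ) :=
  reorder_to_canonical_general R W apply hmod hdep L hooo σ
end
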